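/- arXiv:2012.11048 — 2 statements merged into one kernel-verified Lean document; each statement's English description precedes it below -/
import Mathlib

section
/- For all reals a and b with a > 1/2 and b > 0, the digamma function satisfies ψ(a) − ψ(b) ≥ log((a − 1/2)/b), i.e. ψ(a) − ψ(b) ≥ log(a/b − 1/(2b)). -/
/-!
Convexity of `log ∘ Γ` together with `log Γ(x + 1) - log Γ(x) = log x` gives
`ψ(x) ≤ log x ≤ ψ(x + 1)`; this already bounds `ψ(b)`. For the lower bound on `ψ(a)`, the
recurrence `ψ(x + 1) = ψ(x) + 1/x` and `1/x ≤ log (x + 1/2) - log (x - 1/2)` make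
`ψ(x) - log (x - 1/2)` nonincreasing along `x, x + 1, x + 2, …`, while `ψ(x + n + 1) ≥ log (x + n)`
shows that its values along this sequence are asymptotically nonnegative.
-/

/-- The digamma function: derivative of `log ∘ Γ` on the reals. -/
noncomputable def digamma (x : ℝ) : ℝ := deriv (fun y : ℝ => Real.log (Real.Gamma y)) x

open Real Filter Topology

lemma differentiableAt_log_Gamma {x : ℝ} (hx : 0 < x) :
    DifferentiableAt ℝ (log ∘ Gamma) x :=
  (differentiableAt_Gamma fun m => ne_of_gt (by linarith [m.cast_nonneg (α := ℝ)])).log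
    (Gamma_pos_of_pos hx).ne'

lemma log_Gamma_add_one {x : ℝ} (hx : 0 < x) : log (Gamma (x + 1)) = log x + log (Gamma x) := by
  rw [Gamma_add_one hx.ne', log_mul hx.ne' (Gamma_pos_of_pos hx).ne']

lemma slope_log_Gamma_add_one {x : ℝ} (hx : 0 < x) : slope (log ∘ Gamma) x (x + 1) = log x := by
  rw [slope_def_field, Function.comp_apply, Function.comp_apply, log_Gamma_add_one hx]
  ring

lemma digamma_le_log {x : ℝ} (hx : 0 < x) : digamma x ≤ log x :=
  (convexOn_log_Gamma.deriv_le_slope hx (by positivity : 0 < x + 1) (lt_add_one x)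
    (differentiableAt_log_Gamma hx)).trans_eq (slope_log_Gamma_add_one hx)

lemma log_le_digamma_add_one {x : ℝ} (hx : 0 < x) : log x ≤ digamma (x + 1) :=
  (slope_log_Gamma_add_one hx).symm.trans_le <| convexOn_log_Gamma.slope_le_deriv hx
    (by positivity : 0 < x + 1) (lt_add_one x) (differentiableAt_log_Gamma (by positivity))

lemma digamma_add_one {x : ℝ} (hx : 0 < x) : digamma (x + 1) = digamma x + x⁻¹ := by
  change deriv (fun y => log (Gamma y)) (x + 1) = deriv (log ∘ Gamma) x + x⁻¹
  rw [← deriv_comp_add_const, ← deriv_log,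
    ← deriv_add (differentiableAt_log_Gamma hx) (differentiableAt_log hx.ne')]
  refine EventuallyEq.deriv_eq ?_
  filter_upwards [eventually_gt_nhds hx] with y hy
  exact (log_Gamma_add_one hy).trans (add_comm _ _)

lemma inv_le_log_add_half_sub_log_sub_half {x : ℝ} (hx : 1 / 2 < x) :
    x⁻¹ ≤ log (x + 1 / 2) - log (x - 1 / 2) := by
  obtain ⟨a, ha, rfl⟩ : ∃ a : ℝ, 0 < a ∧ a + 1 / 2 = x := ⟨x - 1 / 2, by linarith, by ring⟩
  -- `log (1 + a⁻¹)` is a series of nonnegative terms whose `k = 0` term is `(a + 1/2)⁻¹`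
  have hsum := hasSum_log_one_add_inv ha
  calc (a + 1 / 2)⁻¹ = 2 * (1 / (2 * (0 : ℕ) + 1)) * (1 / (2 * a + 1)) ^ (2 * 0 + 1) := by
        norm_num
        field_simp
    _ ≤ log (1 + a⁻¹) := le_hasSum hsum 0 fun k _ => by positivity
    _ = log (a + 1 / 2 + 1 / 2) - log (a + 1 / 2 - 1 / 2) := by
        rw [← log_div (by positivity) (by positivity)]
        congr 1
        field_simp
        ring

lemma digamma_add_nat_sub_log_le {x : ℝ} (hx : 1 / 2 < x) (n : ℕ) :
    digamma (x + n) - log (x + n - 1 / 2) ≤ digamma x - log (x - 1 / 2) := by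
  have hstep : ∀ k : ℕ, digamma (x + (k + 1 : ℕ)) - log (x + (k + 1 : ℕ) - 1 / 2)
      ≤ digamma (x + k) - log (x + k - 1 / 2) := fun k => by
    have hxk : 1 / 2 < x + k := by linarith [k.cast_nonneg (α := ℝ)]
    rw [Nat.cast_succ, ← add_assoc, digamma_add_one (by linarith),
      show x + k + 1 - 1 / 2 = x + k + 1 / 2 by ring]
    linarith [inv_le_log_add_half_sub_log_sub_half hxk]
  simpa using antitone_nat_of_succ_le
    (f := fun k : ℕ => digamma (x + k) - log (x + k - 1 / 2)) hstep (Nat.zero_le n)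

lemma log_sub_half_le_digamma {x : ℝ} (hx : 1 / 2 < x) : log (x - 1 / 2) ≤ digamma x := by
  have hlim : Tendsto (fun n : ℕ => log (x + n) - log (x + n + 1 / 2)) atTop (𝓝 0) := by
    have := ((tendsto_log_comp_add_sub_log (1 / 2)).comp
      (tendsto_atTop_add_const_left atTop x tendsto_natCast_atTop_atTop)).neg
    simpa using this
  refine sub_nonneg.1 (le_of_tendsto' hlim fun n => ?_)
  have hxn : 0 < x + n := by linarith [n.cast_nonneg (α := ℝ)]
  have hdecr := digamma_add_nat_sub_log_le hx (n + 1)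
  rw [Nat.cast_succ, ← add_assoc, show x + n + 1 - 1 / 2 = x + n + 1 / 2 by ring] at hdecr
  linarith [log_le_digamma_add_one hxn]

/-- For `a > 1/2` and `b > 0`, `ψ(a) − ψ(b) ≥ log ((a − 1/2)/b)`. -/
theorem digamma_sub_digamma_ge (a b : ℝ) (ha : 1 / 2 < a) (hb : 0 < b) :
    digamma a - digamma b ≥ Real.log ((a - 1 / 2) / b) := by
  rw [ge_iff_le, log_div (by linarith) hb.ne']
  linarith [log_sub_half_le_digamma ha, digamma_le_log hb]
end

section
/- Let K ≥ 1, u : Fin K → ℝ, k : Fin K, W : Fin K → ℝ, and U ∈ ℝ, η ≥ 0, and suppose u k − u ℓ ≥ U + η·(W ℓ) for every ℓ ≠ k. Define q j = exp(u j) / ∑_{j'} exp(u j'). Then q k ≥ 1 − K · exp(−U − η·min_ℓ W ℓ), and for every ℓ ≠ k, q ℓ ≤ exp(−U − η·(W ℓ)). -/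
/-!
Every competitor `ℓ ≠ k` has softmax weight at most `exp (u ℓ - u k)`, since the
normalising sum dominates `exp (u k)`; the gap hypothesis turns this into
`exp (-U - η W ℓ)`, which is at most `exp (-U - η min W)` because `η ≥ 0`.
As the weights sum to one, `k` loses at most `K` times this common bound.
-/

open Finset Real

noncomputable def softmax {ι : Type*} [Fintype ι] (u : ι → ℝ) (j : ι) : ℝ :=
  exp (u j) / ∑ j', exp (u j')

section softmax

variable {ι : Type*} [Fintype ι] (u : ι → ℝ)

theorem sum_exp_pos (k : ι) : 0 < ∑ j, exp (u j) :=
  sum_pos (fun j _ => exp_pos (u j)) ⟨k, mem_univ k⟩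

theorem sum_softmax_eq_one [Nonempty ι] : ∑ j, softmax u j = 1 := by
  obtain ⟨k⟩ := ‹Nonempty ι›
  simp only [softmax]
  rw [← sum_div, div_self (sum_exp_pos u k).ne']

theorem softmax_le_exp_sub (k ℓ : ι) : softmax u ℓ ≤ exp (u ℓ - u k) := by
  rw [softmax, exp_sub]
  exact div_le_div_of_nonneg_left (exp_pos _).le (exp_pos _)
    (single_le_sum (fun j _ => (exp_pos (u j)).le) (mem_univ k))

theorem softmax_le_exp_of_sub_le (k : ι) {ℓ : ι} {c : ℝ} (h : u ℓ - u k ≤ c) :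
    softmax u ℓ ≤ exp c :=
  (softmax_le_exp_sub u k ℓ).trans (exp_le_exp.mpr h)

theorem one_sub_card_sub_one_mul_le_softmax [DecidableEq ι] {k : ι} {c : ℝ}
    (h : ∀ ℓ, ℓ ≠ k → softmax u ℓ ≤ c) :
    1 - (Fintype.card ι - 1) * c ≤ softmax u k := by
  have : Nonempty ι := ⟨k⟩
  have hrest : 1 - softmax u k = ∑ ℓ ∈ univ.erase k, softmax u ℓ := by
    rw [← sum_softmax_eq_one u, sum_erase_eq_sub (mem_univ k)]
  have hbound : ∑ ℓ ∈ univ.erase k, softmax u ℓ ≤ (Fintype.card ι - 1) * c := by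
    calc ∑ ℓ ∈ univ.erase k, softmax u ℓ ≤ ∑ _ℓ ∈ univ.erase k, c :=
          sum_le_sum fun ℓ hℓ => h ℓ (ne_of_mem_erase hℓ)
      _ = (Fintype.card ι - 1) * c := by
          rw [sum_const, card_erase_of_mem (mem_univ k), card_univ, nsmul_eq_mul,
            Nat.cast_pred Fintype.card_pos]
  linarith

end softmax

theorem constrained_softmax_bounds_general (K : ℕ) (u : Fin K → ℝ)
    (k : Fin K) (W : Fin K → ℝ) (U η : ℝ) (hη : 0 ≤ η)
    (hgap : ∀ ℓ, ℓ ≠ k → u k - u ℓ ≥ U + η * W ℓ) :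
    Real.exp (u k) / (∑ j', Real.exp (u j'))
        ≥ 1 - K * Real.exp (-U - η * ⨅ ℓ, W ℓ) ∧
    ∀ ℓ, ℓ ≠ k →
      Real.exp (u ℓ) / (∑ j', Real.exp (u j')) ≤ Real.exp (-U - η * W ℓ) := by
  have hgap_inf : ∀ ℓ, ℓ ≠ k → u ℓ - u k ≤ -U - η * ⨅ ℓ, W ℓ := fun ℓ hℓ => by
    have := mul_le_mul_of_nonneg_left (ciInf_le (Set.finite_range W).bddBelow ℓ) hη
    linarith [hgap ℓ hℓ]
  refine ⟨?_, fun ℓ hℓ => softmax_le_exp_of_sub_le u k (by linarith [hgap ℓ hℓ])⟩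
  have hk := one_sub_card_sub_one_mul_le_softmax u fun ℓ hℓ =>
    softmax_le_exp_of_sub_le u k (hgap_inf ℓ hℓ)
  rw [Fintype.card_fin] at hk
  have := (exp_pos (-U - η * ⨅ ℓ, W ℓ)).le
  exact le_trans (by linarith) hk

/-- Constrained softmax bound (Lemma 7, abstract form): if
`u k − u ℓ ≥ U + η·(W ℓ)` for all `ℓ ≠ k`, with `η ≥ 0`, then the softmax
probability of `k` is at least `1 − K·exp(−U − η·min_ℓ W ℓ)` and that of each
`ℓ ≠ k` is at most `exp(−U − η·(W ℓ))`. -/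
theorem constrained_softmax_bounds (K : ℕ) (hK : 1 ≤ K) (u : Fin K → ℝ)
    (k : Fin K) (W : Fin K → ℝ) (U η : ℝ) (hη : 0 ≤ η)
    (hgap : ∀ ℓ, ℓ ≠ k → u k - u ℓ ≥ U + η * W ℓ) :
    Real.exp (u k) / (∑ j', Real.exp (u j'))
        ≥ 1 - K * Real.exp (-U - η * ⨅ ℓ, W ℓ) ∧
    ∀ ℓ, ℓ ≠ k →
      Real.exp (u ℓ) / (∑ j', Real.exp (u j')) ≤ Real.exp (-U - η * W ℓ) :=
  constrained_softmax_bounds_general K u k W U η hη hgap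
end
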